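/- arXiv:math/0510674 — 3 statements merged into one kernel-verified Lean document; each statement's English description precedes it below -/
import Mathlib

section
/- Let A = ℚ[x₁, x₂, ...] be graded with deg(xₙ) = n, let aₙ = dim_ℚ A_n (the number of partitions of n), and let d be the derivation with d(xₙ) = x_{n-1} (x₀ = 0). Let J = ker d with graded pieces Jₙ of dimension jₙ. Then for all n ≥ 2, jₙ = aₙ - a_{n-1}, while j₀ = j₁ = 1. -/
open MvPolynomial

/-- The derivation `d` on `A = ℚ[x₁, x₂, …]` (with `X i` standing for `x_{i+1}`)
determined by `d x₁ = 0` and `d xₙ = x_{n-1}` for `n ≥ 2`. -/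
noncomputable def dDer : Derivation ℚ (MvPolynomial ℕ ℚ) (MvPolynomial ℕ ℚ) :=
  MvPolynomial.mkDerivation ℚ (fun i => if i = 0 then 0 else X (i - 1))

/-- The degree-`n` graded piece `Aₙ` of `A` (where `xₙ = X (n-1)` has degree `n`). -/
noncomputable def Apiece (n : ℕ) : Submodule ℚ (MvPolynomial ℕ ℚ) :=
  weightedHomogeneousSubmodule ℚ (fun i : ℕ => i + 1) n

/-- The degree-`n` graded piece `Jₙ` of `J = ker d`. -/
noncomputable def Jpiece (n : ℕ) : Submodule ℚ (MvPolynomial ℕ ℚ) :=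
  Apiece n ⊓ LinearMap.ker dDer.toLinearMap

/-- `aₙ = dim_ℚ Aₙ` (the number of partitions of `n`). -/
noncomputable def aDim (n : ℕ) : ℕ := Module.finrank ℚ (Apiece n)

/-- `jₙ = dim_ℚ Jₙ`. -/
noncomputable def jDim (n : ℕ) : ℕ := Module.finrank ℚ (Jpiece n)

/-! Since `d` lowers the weight by one, `Jₙ` is the kernel of `d : Aₙ → Aₙ₋₁`, and rank–nullity
gives `jₙ = aₙ - aₙ₋₁` as soon as this map is onto. For surjectivity, the Leibniz rule gives
`xᵣ q = d(xᵣ₊₁ q) - xᵣ₊₁ d(q)`, so induction on the weight of `q` puts every `xᵣ q`, hence every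
monomial of positive weight, in the image. In weights `0` and `1` every polynomial is a multiple
of `1` or of `x₁`, both killed by `d`, so `j₀ = a₀ = 1` and `j₁ = a₁ = 1`. -/

open Finsupp

theorem Finsupp.finite_setOf_weight_eq {σ : Type*} (w : σ → ℕ) (hw : ∀ i, w i ≠ 0) {n : ℕ}
    (hfin : {i | w i ≤ n}.Finite) : {α : σ →₀ ℕ | weight w α = n}.Finite := by
  classical
  refine (hfin.toFinset.finsupp fun _ => Finset.range (n + 1)).finite_toSet.subset ?_
  intro α (hα : weight w α = n)
  rw [Finset.mem_coe, Finset.mem_finsupp_iff]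
  refine ⟨fun i hi => ?_, fun i _ => ?_⟩
  · simpa [hα] using le_weight_of_ne_zero' w (Finsupp.mem_support_iff.mp hi)
  · simpa [Nat.lt_succ_iff, hα] using le_weight w (hw i) α

theorem Submodule.finrank_map_add_finrank_inf_ker {K V W : Type*} [DivisionRing K]
    [AddCommGroup V] [Module K V] [AddCommGroup W] [Module K W] (f : V →ₗ[K] W)
    (p : Submodule K V) [FiniteDimensional K p] :
    Module.finrank K (p.map f) + Module.finrank K ↥(p ⊓ LinearMap.ker f) = Module.finrank K p := by
  have hker : LinearMap.ker (f.domRestrict p) = (p ⊓ LinearMap.ker f).comap p.subtype := by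
    rw [LinearMap.ker_domRestrict, Submodule.comap_inf, Submodule.comap_subtype_self, top_inf_eq]
  rw [← LinearMap.finrank_range_add_finrank_ker (f.domRestrict p), LinearMap.range_domRestrict,
    hker, (Submodule.comapSubtypeEquivOfLe inf_le_left).finrank_eq]

theorem setOf_weight_eq_of_le_one {n : ℕ} (hn : n ≤ 1) :
    {α : ℕ →₀ ℕ | weight (fun i : ℕ => i + 1) α = n} = {single 0 n} := by
  ext α
  simp only [Set.mem_ofPred_eq, Set.mem_singleton_iff]
  constructor
  · rintro rfl
    have hvanish : ∀ i, i ≠ 0 → α i = 0 := fun i hi => by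
      by_contra h
      have := le_weight_of_ne_zero' (fun i : ℕ => i + 1) h
      omega
    have hα : α = single 0 (α 0) := by
      ext i
      rcases eq_or_ne i 0 with rfl | hi
      · simp
      · simp [hvanish i hi, hi.symm]
    rw [hα, weight_single, smul_eq_mul, zero_add, mul_one]
  · rintro rfl
    rw [weight_single, smul_eq_mul, zero_add, mul_one]

instance (n : ℕ) : FiniteDimensional ℚ (Apiece n) := by
  rw [Apiece, weightedHomogeneousSubmodule_eq_finsupp_supported]
  have := (finite_setOf_weight_eq (fun i : ℕ => i + 1) (by simp)
    (Set.finite_Iio n |>.subset fun i (hi : i + 1 ≤ n) => by simpa using hi)).to_subtype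
  exact Module.Finite.of_basis (basisRestrictSupport ℚ _)

theorem aDim_eq_card (n : ℕ) :
    aDim n = Nat.card {α : ℕ →₀ ℕ | weight (fun i : ℕ => i + 1) α = n} := by
  rw [aDim, Apiece, weightedHomogeneousSubmodule_eq_finsupp_supported]
  exact Module.finrank_eq_nat_card_basis (basisRestrictSupport ℚ _)

theorem aDim_eq_one_of_le_one {n : ℕ} (hn : n ≤ 1) : aDim n = 1 := by
  rw [aDim_eq_card, setOf_weight_eq_of_le_one hn, Nat.card_unique]

@[simp]
theorem dDer_X_zero : dDer (X 0) = 0 := by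
  simp [dDer]

@[simp]
theorem dDer_X_succ (i : ℕ) : dDer (X (i + 1)) = X i := by
  simp [dDer]

theorem dDer_eq_zero_of_mem_Apiece {n : ℕ} (hn : n ≤ 1) {p : MvPolynomial ℕ ℚ}
    (hp : p ∈ Apiece n) : dDer p = 0 := by
  refine derivation_eq_zero_of_forall_mem_vars fun i hi => ?_
  obtain ⟨α, hα, hαi⟩ := (mem_vars_iff_mem_support i).mp hi
  have := le_weight_of_ne_zero' (fun i : ℕ => i + 1) (Finsupp.mem_support_iff.mp hαi)
  have hi0 : i = 0 := by
    have := hp (MvPolynomial.mem_support_iff.mp hα)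
    omega
  rw [hi0, dDer_X_zero]

theorem dDer_mem_Apiece {n : ℕ} {p : MvPolynomial ℕ ℚ} (hp : p ∈ Apiece (n + 1)) :
    dDer p ∈ Apiece n := by
  induction hp using IsWeightedHomogeneous.induction_on with
  | zero => simp
  | add p q _ _ hp hq => simpa using add_mem hp hq
  | monomial α c hα =>
    rw [dDer, mkDerivation_monomial, Finsupp.sum]
    refine Submodule.smul_mem _ _ (Submodule.sum_mem _ fun i hi => ?_)
    have hwt := weight_sub_single_add (w := fun i : ℕ => i + 1) (Finsupp.mem_support_iff.mp hi)
    rcases i with _ | j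
    · simp
    · simp only [Nat.add_sub_cancel, if_neg (Nat.succ_ne_zero j), smul_eq_mul]
      have hdeg : weight (fun i : ℕ => i + 1) (α - single (j + 1) 1) + (j + 1) = n := by omega
      exact hdeg ▸ (isWeightedHomogeneous_monomial _ _ _ rfl).mul (isWeightedHomogeneous_X ℚ _ j)

theorem X_mul_mem_map_dDer {w : ℕ} {q : MvPolynomial ℕ ℚ} (hq : q ∈ Apiece w) (r : ℕ) :
    X r * q ∈ (Apiece (w + r + 2)).map dDer.toLinearMap := by
  induction w using Nat.strong_induction_on generalizing r q with
  | _ w ih =>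
  have hlift : X (r + 1) * q ∈ Apiece (w + r + 2) :=
    (by omega : r + 1 + 1 + w = w + r + 2) ▸ (isWeightedHomogeneous_X ℚ _ (r + 1)).mul hq
  have hcorrection : X (r + 1) * dDer q ∈ (Apiece (w + r + 2)).map dDer.toLinearMap := by
    cases w with
    | zero => simp [dDer_eq_zero_of_mem_Apiece zero_le_one hq]
    | succ w =>
      rw [show w + 1 + r + 2 = w + (r + 1) + 2 by omega]
      exact ih w w.lt_succ_self (dDer_mem_Apiece hq) (r + 1)
  have hleibniz : X r * q = dDer (X (r + 1) * q) - X (r + 1) * dDer q := by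
    rw [Derivation.leibniz, dDer_X_succ, smul_eq_mul, smul_eq_mul]
    ring
  rw [hleibniz]
  exact sub_mem (Submodule.mem_map_of_mem hlift) hcorrection

theorem map_dDer_Apiece {n : ℕ} (hn : 1 ≤ n) :
    (Apiece (n + 1)).map dDer.toLinearMap = Apiece n := by
  refine le_antisymm (Submodule.map_le_iff_le_comap.mpr fun _ => dDer_mem_Apiece) fun p hp => ?_
  induction hp using IsWeightedHomogeneous.induction_on with
  | zero => exact zero_mem _
  | add p q _ _ hp hq => exact add_mem hp hq
  | monomial α c hα =>
    obtain ⟨i, hi⟩ : ∃ i, α i ≠ 0 := by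
      by_contra! h
      rw [show α = 0 from Finsupp.ext h, map_zero] at hα
      omega
    have hwt := weight_sub_single_add (w := fun i : ℕ => i + 1) hi
    have hmon : monomial α c = X i * monomial (α - single i 1) c := by
      rw [X, monomial_mul, one_mul, add_comm, sub_add_single_one_cancel hi]
    rw [hmon, show n + 1 = weight (fun i : ℕ => i + 1) (α - single i 1) + i + 2 by omega]
    exact X_mul_mem_map_dDer (isWeightedHomogeneous_monomial _ _ _ rfl) i

theorem Jpiece_eq_Apiece {n : ℕ} (hn : n ≤ 1) : Jpiece n = Apiece n :=
  inf_eq_left.mpr fun _ hp => dDer_eq_zero_of_mem_Apiece hn hp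

theorem jDim_eq_one_of_le_one {n : ℕ} (hn : n ≤ 1) : jDim n = 1 := by
  rw [jDim, Jpiece_eq_Apiece hn, ← aDim, aDim_eq_one_of_le_one hn]

theorem jDim_add_aDim {n : ℕ} (hn : 1 ≤ n) : jDim (n + 1) + aDim n = aDim (n + 1) := by
  have hrank := Submodule.finrank_map_add_finrank_inf_ker dDer.toLinearMap (Apiece (n + 1))
  rw [map_dDer_Apiece hn] at hrank
  rw [jDim, aDim, aDim, Jpiece, ← hrank, add_comm]

/-- For all `n ≥ 2`, `jₙ = aₙ - a_{n-1}`, while `j₀ = j₁ = 1`. -/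
theorem stmt_1 :
    (∀ n : ℕ, 2 ≤ n → (jDim n : ℤ) = (aDim n : ℤ) - (aDim (n - 1) : ℤ)) ∧
      jDim 0 = 1 ∧ jDim 1 = 1 := by
  refine ⟨fun n hn => ?_, jDim_eq_one_of_le_one zero_le_one, jDim_eq_one_of_le_one le_rfl⟩
  obtain ⟨m, rfl⟩ : ∃ m, n = m + 1 := ⟨n - 1, by omega⟩
  have hsum := jDim_add_aDim (show 1 ≤ m by omega)
  rw [Nat.add_sub_cancel]
  omega
end

section
/- Let c₁, c₂, c₃, ... be the coefficients of a formal power series c(t) = 1 + c₁t + c₂t² + ... over a commutative ring, and suppose c(t)·b(t) = a(t) where a(t) is a polynomial of degree ≤ p and b(t) is a polynomial of degree ≤ q with constant term 1. Then for every p' > p, the Hankel determinant h_{p', q+1}(c) = det( (c_{i-j+p'})_{1 ≤ i,j ≤ q+1} ) vanishes, where c₀ = 1 and c_k = 0 for k < 0. -/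
/-!
For `n > p` the coefficient of `tⁿ` in `c(t) b(t) = a(t)` gives `∑ⱼ c_{n-j} b_j = 0`.
Taking `n = i + p'` for `i = 0, …, q`, the coefficient vector `(b₀, …, b_q)` is a null vector of
the Hankel matrix `(c_{i-j+p'})`. Multiplying by the adjugate gives `det · b₀ = 0`, and `b₀ = 1`.
-/

/-- Extension of a sequence to integer indices by `c_k = 0` for `k < 0`. -/
def czExt {R : Type*} [CommRing R] (c : ℕ → R) : ℤ → R :=
  fun k => if 0 ≤ k then c k.toNat else 0

theorem czExt_natCast_sub {R : Type*} [CommRing R] (c : ℕ → R) (n j : ℕ) :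
    czExt c ((n : ℤ) - j) = if j ≤ n then c (n - j) else 0 := by
  by_cases hjn : j ≤ n <;> simp [czExt, hjn]

theorem PowerSeries.coeff_mk_mul_coe {R : Type*} [CommRing R] (c : ℕ → R) {b : Polynomial R}
    {q : ℕ} (hb : b.natDegree ≤ q) (n : ℕ) :
    coeff n (mk c * (b : PowerSeries R)) =
      ∑ j ∈ Finset.range (q + 1), czExt c ((n : ℤ) - j) * b.coeff j := by
  have hb_sum : (b : PowerSeries R) = ∑ j ∈ Finset.range (q + 1), C (b.coeff j) * X ^ j := by
    conv_lhs => rw [b.as_sum_range_C_mul_X_pow' (Nat.lt_succ_of_le hb)]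
    rw [← Polynomial.coeToPowerSeries.ringHom_apply, map_sum]
    simp
  simp only [hb_sum, Finset.mul_sum, czExt_natCast_sub, map_sum]
  refine Finset.sum_congr rfl fun j _ => ?_
  rw [mul_left_comm, coeff_C_mul, coeff_mul_X_pow', coeff_mk]
  split_ifs <;> simp [mul_comm]

theorem stmt_10_general {R : Type*} [CommRing R] (c : ℕ → R)
    (a b : Polynomial R) (p q : ℕ)
    (ha : a.natDegree ≤ p) (hb : b.natDegree ≤ q) (hb0 : b.coeff 0 = 1)
    (h : PowerSeries.mk c * (b : PowerSeries R) = (a : PowerSeries R)) :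
    ∀ p' : ℕ, p < p' →
      Matrix.det (Matrix.of fun i j : Fin (q + 1) =>
        czExt c (((i : ℕ) : ℤ) - ((j : ℕ) : ℤ) + (p' : ℤ))) = 0 := by
  intro p' hp'
  have hnull : (Matrix.of fun i j : Fin (q + 1) =>
      czExt c (((i : ℕ) : ℤ) - ((j : ℕ) : ℤ) + (p' : ℤ))).mulVec (fun j => b.coeff j) = 0 := by
    funext i
    have hcoeff := congrArg (PowerSeries.coeff ((i : ℕ) + p')) h
    rw [PowerSeries.coeff_mk_mul_coe c hb, Polynomial.coeff_coe,
      a.coeff_eq_zero_of_natDegree_lt (by omega), ← Fin.sum_univ_eq_sum_range] at hcoeff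
    simp only [Matrix.mulVec, dotProduct, Matrix.of_apply, Pi.zero_apply, ← hcoeff]
    refine Finset.sum_congr rfl fun j _ => ?_
    congr 2
    push_cast
    ring
  refine Matrix.det_eq_zero_of_mulVec_eq_zero_of_mem_nonZeroDivisors hnull (i := 0) ?_
  simp [hb0]

/-- If `c(t) = 1 + c₁t + c₂t² + ⋯` satisfies `c(t)·b(t) = a(t)` with `deg a ≤ p`,
`deg b ≤ q` and `b(0) = 1`, then for every `p' > p` the Hankel determinant
`h_{p', q+1}(c) = det((c_{i-j+p'})_{1≤i,j≤q+1})` vanishes (with `c₀ = 1`,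
`c_k = 0` for `k < 0`). -/
theorem stmt_10 {R : Type*} [CommRing R] (c : ℕ → R) (hc0 : c 0 = 1)
    (a b : Polynomial R) (p q : ℕ)
    (ha : a.natDegree ≤ p) (hb : b.natDegree ≤ q) (hb0 : b.coeff 0 = 1)
    (h : PowerSeries.mk c * (b : PowerSeries R) = (a : PowerSeries R)) :
    ∀ p' : ℕ, p < p' →
      Matrix.det (Matrix.of fun i j : Fin (q + 1) =>
        czExt c (((i : ℕ) : ℤ) - ((j : ℕ) : ℤ) + (p' : ℤ))) = 0 :=
  stmt_10_general c a b p q ha hb hb0 h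
end

section
/- Let x₁,...,x_p and y₁,...,y_q be indeterminates, let a(t) = ∏(1 + x_i t), b(t) = ∏(1 + y_j t), and define the sequence (cₙ) by the power series identity Σ cₙ tⁿ = a(t)/b(t). Then the Hankel determinant h_{p,q}(c) = det((c_{i-j+p})_{1≤i,j≤q}) equals the resultant ∏_{i,j} (x_i - y_j). -/
/-!
Over the fraction field put `r_k = -y_k`, the reciprocal roots of `b`. The coefficients of `1/b`,
extended by zero to negative indices, are an exponential sum `Σ_k α_k r_k^n` for every integer
`n > -q`: choose `α` by solving the Vandermonde system given by the `q` values on `-q < n ≤ 0`,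
then both sides obey the recurrence with characteristic polynomial `b` for `n > 0`.
Multiplying by `a`, of degree `p`, gives `c_n = Σ_k α_k a(1/r_k) r_k^n` for `n > p - q`, which
covers every entry of the Hankel matrix, so that matrix factors as
`Vᵀ · diag(α_k a(1/r_k) r_k^p) · V'` with Vandermonde matrices `V`, `V'` in `r` and `1/r`.
The unknown constant `det V · det V' · ∏ α_k` equals `1`: it is the case `a = 1`, where the
Hankel matrix is unitriangular. Finally `a(1/r_k) r_k^p = ∏_i (x_i - y_k)`.
-/

open MvPolynomial

open Finset
open scoped Matrix

section CommRing

variable {R : Type*} [CommRing R]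

lemma czExt_of_neg (c : ℕ → R) {n : ℤ} (hn : n < 0) : czExt c n = 0 :=
  if_neg (not_le.mpr hn)

lemma czExt_natCast (c : ℕ → R) (n : ℕ) : czExt c n = c n := by
  simp [czExt]

lemma czExt_coeff_mul_polynomial (f : PowerSeries R) (a : Polynomial R) {d : ℕ}
    (ha : a.natDegree ≤ d) (n : ℤ) :
    czExt (PowerSeries.coeff · (f * (a : PowerSeries R))) n =
      ∑ m ∈ range (d + 1), a.coeff m * czExt (PowerSeries.coeff · f) (n - m) := by
  rcases lt_or_ge n 0 with hn | hn
  · rw [czExt_of_neg _ hn]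
    exact (sum_eq_zero fun m _ => by rw [czExt_of_neg _ (by omega), mul_zero]).symm
  lift n to ℕ using hn
  calc czExt (PowerSeries.coeff · (f * (a : PowerSeries R))) n
      = ∑ m ∈ range (n + 1), a.coeff m * czExt (PowerSeries.coeff · f) (n - m) := by
        rw [czExt_natCast, mul_comm, PowerSeries.coeff_mul,
          Finset.Nat.sum_antidiagonal_eq_sum_range_succ
            (fun i j => PowerSeries.coeff i (a : PowerSeries R) * PowerSeries.coeff j f)]
        refine sum_congr rfl fun m hm => ?_
        rw [Polynomial.coeff_coe, ← Nat.cast_sub (by simpa [Nat.lt_succ_iff] using hm),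
          czExt_natCast]
    _ = ∑ m ∈ range (n + d + 1), a.coeff m * czExt (PowerSeries.coeff · f) (n - m) :=
        sum_subset (range_subset_range.mpr (by omega)) fun m _ hm => by
          rw [czExt_of_neg _ (by simp at hm; omega), mul_zero]
    _ = _ := (sum_subset (range_subset_range.mpr (by omega)) fun m _ hm => by
          rw [Polynomial.coeff_eq_zero_of_natDegree_lt (by simp at hm; omega), zero_mul]).symm

end CommRing

section Field

variable {K : Type*} [Field K]

lemma sum_coeff_mul_zpow_sub (a : Polynomial K) {d : ℕ} (ha : a.natDegree ≤ d) {r : K}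
    (hr : r ≠ 0) (n : ℤ) :
    ∑ m ∈ range (d + 1), a.coeff m * r ^ (n - m) = r ^ n * a.eval r⁻¹ := by
  rw [Polynomial.eval_eq_sum_range' (Nat.lt_succ_of_le ha), mul_sum]
  refine sum_congr rfl fun m _ => ?_
  rw [zpow_sub₀ hr, zpow_natCast, div_eq_mul_inv, inv_pow]
  ring

lemma czExt_coeff_mul_eq_sum_zpow {ι : Type*} [Fintype ι] {f : PowerSeries K} {r α : ι → K}
    (hr : ∀ k, r k ≠ 0) {N : ℤ}
    (hf : ∀ n, N < n → czExt (PowerSeries.coeff · f) n = ∑ k, α k * r k ^ n)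
    (a : Polynomial K) {d : ℕ} (ha : a.natDegree ≤ d) (n : ℤ) (hn : N + d < n) :
    czExt (PowerSeries.coeff · (f * (a : PowerSeries K))) n
      = ∑ k, α k * a.eval (r k)⁻¹ * r k ^ n := by
  rw [czExt_coeff_mul_polynomial f a ha]
  calc ∑ m ∈ range (d + 1), a.coeff m * czExt (PowerSeries.coeff · f) (n - m)
      = ∑ k, α k * ∑ m ∈ range (d + 1), a.coeff m * r k ^ (n - m) := by
        simp_rw [mul_sum]
        rw [sum_comm]
        refine sum_congr rfl fun m hm => ?_
        rw [hf _ (by simp at hm; omega), mul_sum]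
        exact sum_congr rfl fun k _ => by ring
    _ = _ := sum_congr rfl fun k _ => by rw [sum_coeff_mul_zpow_sub a ha (hr k)]; ring

lemma eq_of_linear_recurrence {e f : ℤ → K} {β : ℕ → K} (hβ : β 0 ≠ 0) {q : ℕ} {N : ℤ}
    (hrec : ∀ n, N < n →
      ∑ m ∈ range (q + 1), β m * e (n - m) = ∑ m ∈ range (q + 1), β m * f (n - m))
    (hinit : ∀ n, N - q < n → n ≤ N → e n = f n) (n : ℤ) (hn : N - q < n) : e n = f n := by
  suffices ∀ k : ℕ, ∀ n, N - q < n → n ≤ N + k → e n = f n from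
    this (n - N).toNat n hn (by omega)
  intro k
  induction k with
  | zero => simpa using hinit
  | succ k ih =>
    intro n hn hnk
    rcases le_or_gt n (N + k) with h | h
    · exact ih n hn h
    have hlower : ∑ m ∈ range q, β (m + 1) * e (n - (m + 1 : ℕ))
        = ∑ m ∈ range q, β (m + 1) * f (n - (m + 1 : ℕ)) :=
      sum_congr rfl fun m hm => by
        have := mem_range.mp hm
        rw [ih _ (by omega) (by omega)]
    have := hrec n (by omega)
    rw [sum_range_succ', sum_range_succ', hlower] at this
    simpa [hβ] using this

lemma exists_czExt_coeff_inv_eq_sum_zpow {q : ℕ} {b : Polynomial K} (hb0 : b.coeff 0 = 1)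
    (hb : b.natDegree ≤ q) {r : Fin q → K} (hr : ∀ k, r k ≠ 0) (hinj : Function.Injective r)
    (hroot : ∀ k, b.eval (r k)⁻¹ = 0) :
    ∃ α : Fin q → K, ∀ n : ℤ, -(q : ℤ) < n →
      czExt (PowerSeries.coeff · (b : PowerSeries K)⁻¹) n = ∑ k, α k * r k ^ n := by
  have hV : IsUnit (Matrix.vandermonde fun k => (r k)⁻¹)ᵀ := by
    rw [Matrix.isUnit_iff_isUnit_det, Matrix.det_transpose, isUnit_iff_ne_zero,
      Matrix.det_vandermonde_ne_zero_iff]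
    exact inv_injective.comp hinj
  obtain ⟨α, hα⟩ :=
    Matrix.mulVec_surjective_iff_isUnit.mpr hV fun j : Fin q => if (j : ℕ) = 0 then 1 else 0
  refine ⟨α, fun n hn => eq_of_linear_recurrence
    (e := czExt (PowerSeries.coeff · (b : PowerSeries K)⁻¹)) (f := fun n => ∑ k, α k * r k ^ n)
    (β := b.coeff) (q := q) (N := 0) (by simp [hb0])
    (fun n hn => ?_) (fun n hn hn0 => ?_) n (by omega)⟩
  · rw [← czExt_coeff_mul_polynomial _ _ hb, PowerSeries.inv_mul_cancel _ (by simp [hb0]),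
      czExt, if_pos hn.le, PowerSeries.coeff_one, if_neg (by omega)]
    calc (0 : K) = ∑ k, α k * (r k ^ n * b.eval (r k)⁻¹) := by simp [hroot]
      _ = _ := by
        simp_rw [← sum_coeff_mul_zpow_sub b hb (hr _), mul_sum]
        rw [sum_comm]
        exact sum_congr rfl fun m _ => sum_congr rfl fun k _ => by ring
  · obtain ⟨j, rfl⟩ : ∃ j : ℕ, n = -j := ⟨n.natAbs, by omega⟩
    have := congrFun hα ⟨j, by omega⟩
    simp only [Matrix.mulVec, dotProduct, Matrix.transpose_apply, Matrix.vandermonde_apply] at this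
    have hlhs :
        czExt (PowerSeries.coeff · (b : PowerSeries K)⁻¹) (-j) = if j = 0 then 1 else 0 := by
      rcases Nat.eq_zero_or_pos j with rfl | hj
      · simp [czExt, hb0]
      · rw [czExt_of_neg _ (by omega), if_neg hj.ne']
    rw [hlhs, ← this]
    exact sum_congr rfl fun k _ => by rw [zpow_neg, zpow_natCast, inv_pow, mul_comm]

lemma det_hankel_eq_of_eq_sum_zpow {q : ℕ} {s : ℤ → K} {r α : Fin q → K} (hr : ∀ k, r k ≠ 0)
    (p : ℤ) (hs : ∀ n, p - q < n → s n = ∑ k, α k * r k ^ n) :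
    (Matrix.of fun i j : Fin q => s ((i : ℕ) - (j : ℕ) + p)).det
      = (Matrix.vandermonde r).det * (Matrix.vandermonde fun k => (r k)⁻¹).det
        * ∏ k, α k * r k ^ p := by
  have hfactor : Matrix.of (fun i j : Fin q => s ((i : ℕ) - (j : ℕ) + p))
      = (Matrix.vandermonde r)ᵀ * Matrix.diagonal (fun k => α k * r k ^ p)
        * Matrix.vandermonde fun k => (r k)⁻¹ := by
    ext i j
    rw [Matrix.of_apply, hs _ (by omega), Matrix.mul_apply]
    refine sum_congr rfl fun k _ => ?_
    rw [Matrix.mul_diagonal, Matrix.transpose_apply, Matrix.vandermonde_apply,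
      Matrix.vandermonde_apply, zpow_add₀ (hr k), zpow_sub₀ (hr k), zpow_natCast, zpow_natCast,
      inv_pow]
    ring
  rw [hfactor, Matrix.det_mul, Matrix.det_mul, Matrix.det_transpose, Matrix.det_diagonal]
  ring

lemma det_toeplitz_eq_one {q : ℕ} {c : ℕ → K} (hc : c 0 = 1) :
    (Matrix.of fun i j : Fin q => czExt c ((i : ℕ) - (j : ℕ))).det = 1 := by
  rw [Matrix.det_of_isLowerTriangular]
  · simp [czExt, hc]
  · intro i j hij
    have : (i : ℕ) < j := hij
    exact czExt_of_neg c (by omega)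


section LinearFactors

variable {p : ℕ} (x : Fin p → K)

lemma natDegree_prod_C_mul_X_add_one_le :
    (∏ i, (Polynomial.C (x i) * Polynomial.X + 1)).natDegree ≤ p := by
  refine (Polynomial.natDegree_prod_le _ _).trans ?_
  have hlin : ∀ i, (Polynomial.C (x i) * Polynomial.X + 1).natDegree ≤ 1 := fun i => by
    rw [← Polynomial.C_1]; exact Polynomial.natDegree_linear_le
  simpa using sum_le_sum fun i (_ : i ∈ univ) => hlin i

lemma coeff_zero_prod_C_mul_X_add_one :
    (∏ i, (Polynomial.C (x i) * Polynomial.X + 1)).coeff 0 = 1 := by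
  simp [Polynomial.coeff_zero_eq_eval_zero, Polynomial.eval_prod]

lemma eval_inv_prod_C_mul_X_add_one_mul_pow {r : K} (hr : r ≠ 0) :
    (∏ i, (Polynomial.C (x i) * Polynomial.X + 1)).eval r⁻¹ * r ^ p = ∏ i, (x i + r) := by
  rw [Polynomial.eval_prod, ← Fin.prod_const, ← prod_mul_distrib]
  refine prod_congr rfl fun i _ => ?_
  simp only [Polynomial.eval_add, Polynomial.eval_mul, Polynomial.eval_C, Polynomial.eval_X,
    Polynomial.eval_one]
  field_simp

end LinearFactors

theorem det_hankel_eq_prod_sub {p q : ℕ} (x : Fin p → K) {y : Fin q → K} (hy0 : ∀ j, y j ≠ 0)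
    (hy : Function.Injective y) {c : ℕ → K}
    (h : PowerSeries.mk c *
        ((∏ j, (Polynomial.C (y j) * Polynomial.X + 1) : Polynomial K) : PowerSeries K)
      = ((∏ i, (Polynomial.C (x i) * Polynomial.X + 1) : Polynomial K) : PowerSeries K)) :
    (Matrix.of fun i j : Fin q => czExt c ((i : ℕ) - (j : ℕ) + p)).det
      = ∏ i, ∏ j, (x i - y j) := by
  set a := ∏ i, (Polynomial.C (x i) * Polynomial.X + 1)
  set b := ∏ j, (Polynomial.C (y j) * Polynomial.X + 1)
  set r : Fin q → K := fun k => -y k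
  have hr : ∀ k, r k ≠ 0 := fun k => neg_ne_zero.mpr (hy0 k)
  have hroot : ∀ k, b.eval (r k)⁻¹ = 0 := fun k => by
    rw [Polynomial.eval_prod]
    exact prod_eq_zero (mem_univ k) (by simp [r, hy0 k])
  obtain ⟨α, hα⟩ := exists_czExt_coeff_inv_eq_sum_zpow (coeff_zero_prod_C_mul_X_add_one y)
    (natDegree_prod_C_mul_X_add_one_le y) hr (neg_injective.comp hy) hroot
  set g := (b : PowerSeries K)⁻¹
  have hg0 : PowerSeries.coeff 0 g = 1 := by
    rw [PowerSeries.coeff_zero_eq_constantCoeff_apply, PowerSeries.constantCoeff_inv,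
      Polynomial.constantCoeff_coe, coeff_zero_prod_C_mul_X_add_one, inv_one]
  have hc : c = (PowerSeries.coeff · (g * (a : PowerSeries K))) := by
    have hbg : (b : PowerSeries K) * g = 1 := PowerSeries.mul_inv_cancel _ (by
      simp [b, coeff_zero_prod_C_mul_X_add_one])
    funext m
    rw [mul_comm, ← h, mul_assoc, hbg, mul_one, PowerSeries.coeff_mk]
  have hnormalize : (Matrix.vandermonde r).det * (Matrix.vandermonde fun k => (r k)⁻¹).det
      * ∏ k, α k = 1 := by
    have := det_hankel_eq_of_eq_sum_zpow hr 0 (by simpa using hα)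
    simp only [add_zero, zpow_zero, mul_one] at this
    rw [← this, det_toeplitz_eq_one hg0]
  rw [hc, det_hankel_eq_of_eq_sum_zpow hr p fun n hn =>
    czExt_coeff_mul_eq_sum_zpow hr hα a (natDegree_prod_C_mul_X_add_one_le x) n (by omega)]
  have hfactor : ∀ k, α k * a.eval (r k)⁻¹ * r k ^ (p : ℤ) = α k * ∏ i, (x i - y k) :=
    fun k => by
      rw [zpow_natCast, mul_assoc, eval_inv_prod_C_mul_X_add_one_mul_pow x (hr k)]
      simp only [r, sub_eq_add_neg]
  rw [prod_congr rfl fun k _ => hfactor k, prod_mul_distrib, ← mul_assoc, hnormalize, one_mul,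
    prod_comm]

end Field

lemma RingHom.map_czExt {R S : Type*} [CommRing R] [CommRing S] (φ : R →+* S) (c : ℕ → R)
    (n : ℤ) : φ (czExt c n) = czExt (fun m => φ (c m)) n := by
  simp only [czExt, apply_ite φ, map_zero]

/-- Koschorke's identity: with indeterminates `x₁,…,x_p, y₁,…,y_q`,
`a(t) = ∏(1 + xᵢt)`, `b(t) = ∏(1 + yⱼt)`, and `(cₙ)` defined by
`Σ cₙ tⁿ = a(t)/b(t)`, the Hankel determinant `h_{p,q}(c) = det((c_{i-j+p}))`
equals the resultant `∏_{i,j} (xᵢ - yⱼ)`. -/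
theorem stmt_12 (p q : ℕ)
    (c : ℕ → MvPolynomial (Fin p ⊕ Fin q) ℚ)
    (h : PowerSeries.mk c *
        ((∏ j : Fin q, (Polynomial.C (X (Sum.inr j)) * Polynomial.X + 1) :
          Polynomial (MvPolynomial (Fin p ⊕ Fin q) ℚ)) : PowerSeries (MvPolynomial (Fin p ⊕ Fin q) ℚ))
      = ((∏ i : Fin p, (Polynomial.C (X (Sum.inl i)) * Polynomial.X + 1) :
          Polynomial (MvPolynomial (Fin p ⊕ Fin q) ℚ)) : PowerSeries (MvPolynomial (Fin p ⊕ Fin q) ℚ))) :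
    Matrix.det (Matrix.of fun i j : Fin q =>
        czExt c (((i : ℕ) : ℤ) - ((j : ℕ) : ℤ) + (p : ℤ)))
      = ∏ i : Fin p, ∏ j : Fin q, (X (Sum.inl i) - X (Sum.inr j)) := by
  let φ := algebraMap (MvPolynomial (Fin p ⊕ Fin q) ℚ)
    (FractionRing (MvPolynomial (Fin p ⊕ Fin q) ℚ))
  have hφ : Function.Injective φ := IsFractionRing.injective _ _
  have hy0 : ∀ j, φ (X (Sum.inr j)) ≠ 0 := fun j =>
    (map_ne_zero_iff φ hφ).mpr (MvPolynomial.X_ne_zero _)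
  have hy : Function.Injective fun j => φ (X (Sum.inr j)) :=
    hφ.comp (MvPolynomial.X_injective.comp Sum.inr_injective)
  apply hφ
  have h' := congrArg (PowerSeries.map φ) h
  simp only [map_mul, ← Polynomial.polynomial_map_coe, Polynomial.map_prod, Polynomial.map_add,
    Polynomial.map_mul, Polynomial.map_C, Polynomial.map_X, Polynomial.map_one] at h'
  rw [show PowerSeries.map φ (PowerSeries.mk c) = PowerSeries.mk fun m => φ (c m) by
    ext; simp] at h'
  have hmat : φ.mapMatrix (Matrix.of fun i j : Fin q => czExt c ((i : ℕ) - (j : ℕ) + p))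
      = Matrix.of fun i j : Fin q => czExt (fun m => φ (c m)) ((i : ℕ) - (j : ℕ) + p) := by
    ext i j
    exact φ.map_czExt c _
  rw [RingHom.map_det, hmat, det_hankel_eq_prod_sub _ hy0 hy h']
  simp only [map_prod, map_sub]
end
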